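/- arXiv:1403.7916 — 2 statements merged into one kernel-verified Lean document; each statement's English description precedes it below -/
import Mathlib

section
/- Initial segment of the degree sequence of the Kyle graph: let s = (a_1, …, a_l) be an ordered string with all entries a_t ≥ 1, let k = max{a_1, …, a_l}, h_1 = min{a_1, …, a_l}, and n = 2k + 1. Then for every i with 1 ≤ i ≤ h_1 + 1, the degrees in O_{2k+1}(s) satisfy d(v_i) = Σ_{t=1}^{l} a_t + (i − 1)·l, and likewise d(v_{n+1−i}) = Σ_{t=1}^{l} a_t + (i − 1)·l. -/
lemma card_filter_listsum {α : Type*} (p : α → Prop) [DecidablePred p]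
    (l : List (Multiset α)) :
    Multiset.card (l.sum.filter p) =
      (l.map (fun m => Multiset.card (m.filter p))).sum := by
  induction l with
  | nil => simp
  | cons a tl ih => simp [Multiset.filter_add, ih]

lemma list_sum_range {M : Type*} [AddCommMonoid M] (f : ℕ → M) (n : ℕ) :
    ((List.range n).map f).sum = ∑ t ∈ Finset.range n, f t := by
  induction n with
  | zero => simp
  | succ n ih => simp [List.range_succ, Finset.sum_range_succ, ih]

lemma sum_getD (s : List ℕ) :
    ∑ t ∈ Finset.range s.length, s.getD t 0 = s.sum := by
  induction s with
  | nil => simp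
  | cons a tl ih =>
    rw [List.length_cons, Finset.sum_range_succ']
    simp only [List.getD_cons_succ, List.getD_cons_zero, ih, List.sum_cons]
    omega

lemma card_fwd_fst (n i a : ℕ) (hi : 1 ≤ i) (hin : i ≤ n) :
    ((Finset.Icc 1 n ×ˢ Finset.Icc 1 n).filter
      (fun p => (p.1 < p.2 ∧ p.2 ≤ p.1 + a) ∧ p.1 = i)).card = min a (n - i) := by
  rw [show ((Finset.Icc 1 n ×ˢ Finset.Icc 1 n).filter
      (fun p => (p.1 < p.2 ∧ p.2 ≤ p.1 + a) ∧ p.1 = i))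
      = {i} ×ˢ Finset.Icc (i+1) (min n (i+a)) by
    ext ⟨x, y⟩
    simp only [Finset.mem_filter, Finset.mem_product, Finset.mem_Icc,
      Finset.mem_singleton, Nat.le_min]
    omega]
  simp [Nat.card_Icc]
  omega

lemma card_fwd_snd (n i a : ℕ) (hi : 1 ≤ i) (hin : i ≤ n) :
    ((Finset.Icc 1 n ×ˢ Finset.Icc 1 n).filter
      (fun p => (p.1 < p.2 ∧ p.2 ≤ p.1 + a) ∧ p.2 = i)).card = min a (i - 1) := by
  rw [show ((Finset.Icc 1 n ×ˢ Finset.Icc 1 n).filter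
      (fun p => (p.1 < p.2 ∧ p.2 ≤ p.1 + a) ∧ p.2 = i))
      = (Finset.Icc (max 1 (i - a)) (i-1)) ×ˢ {i} by
    ext ⟨x, y⟩
    simp only [Finset.mem_filter, Finset.mem_product, Finset.mem_Icc,
      Finset.mem_singleton, Nat.max_le]
    omega]
  simp [Nat.card_Icc]
  omega

lemma card_bwd_fst (n i a : ℕ) (hi : 1 ≤ i) (hin : i ≤ n) :
    ((Finset.Icc 1 n ×ˢ Finset.Icc 1 n).filter
      (fun p => (p.2 < p.1 ∧ p.1 ≤ p.2 + a) ∧ p.1 = i)).card = min a (i - 1) := by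
  rw [show ((Finset.Icc 1 n ×ˢ Finset.Icc 1 n).filter
      (fun p => (p.2 < p.1 ∧ p.1 ≤ p.2 + a) ∧ p.1 = i))
      = {i} ×ˢ (Finset.Icc (max 1 (i - a)) (i-1)) by
    ext ⟨x, y⟩
    simp only [Finset.mem_filter, Finset.mem_product, Finset.mem_Icc,
      Finset.mem_singleton, Nat.max_le]
    omega]
  simp [Nat.card_Icc]
  omega

lemma card_bwd_snd (n i a : ℕ) (hi : 1 ≤ i) (hin : i ≤ n) :
    ((Finset.Icc 1 n ×ˢ Finset.Icc 1 n).filter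
      (fun p => (p.2 < p.1 ∧ p.1 ≤ p.2 + a) ∧ p.2 = i)).card = min a (n - i) := by
  rw [show ((Finset.Icc 1 n ×ˢ Finset.Icc 1 n).filter
      (fun p => (p.2 < p.1 ∧ p.1 ≤ p.2 + a) ∧ p.2 = i))
      = (Finset.Icc (i+1) (min n (i+a))) ×ˢ {i} by
    ext ⟨x, y⟩
    simp only [Finset.mem_filter, Finset.mem_product, Finset.mem_Icc,
      Finset.mem_singleton, Nat.le_min]
    omega]
  simp [Nat.card_Icc]
  omega



/-- Arc multiset of the ornated graph `O_n(s)` on vertex set `{1, …, n}`: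
for each entry of the ordered string `s` at 1-based odd index `t` (0-based even
position `t-1`) with value `a`, one arc `(i, j)` for every `1 ≤ i < j ≤ n` with
`j ≤ i + a`; for each entry at 1-based even index (0-based odd position) with
value `a`, one arc `(i, j)` for every `n ≥ i > j ≥ 1` with `i ≤ j + a`.
Arcs arising from different entries are counted with multiplicity. -/
def ornArcs (s : List ℕ) (n : ℕ) : Multiset (ℕ × ℕ) :=
  ((List.range s.length).map (fun t =>
    ((Finset.Icc 1 n ×ˢ Finset.Icc 1 n).filter (fun p =>
      (t % 2 = 0 ∧ p.1 < p.2 ∧ p.2 ≤ p.1 + s.getD t 0) ∨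
      (t % 2 = 1 ∧ p.2 < p.1 ∧ p.1 ≤ p.2 + s.getD t 0))).val)).sum

/-- Degree of vertex `i` in the underlying multigraph of `O_n(s)`:
the number of arcs incident with `i`, counted with multiplicity. -/
def ornDeg (s : List ℕ) (n i : ℕ) : ℕ :=
  Multiset.card ((ornArcs s n).filter (fun p => p.1 = i)) +
  Multiset.card ((ornArcs s n).filter (fun p => p.2 = i))

lemma ornDeg_eq (s : List ℕ) (n i : ℕ) (hi : 1 ≤ i) (hin : i ≤ n) :
    ornDeg s n i = ∑ t ∈ Finset.range s.length,
      (min (s.getD t 0) (n - i) + min (s.getD t 0) (i - 1)) := by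
  unfold ornDeg ornArcs
  rw [card_filter_listsum, card_filter_listsum, List.map_map, List.map_map,
    list_sum_range, list_sum_range, ← Finset.sum_add_distrib]
  refine Finset.sum_congr rfl (fun t _ => ?_)
  simp only [Function.comp_apply, ← Finset.filter_val, Finset.filter_filter,
    Multiset.card_coe, ← Finset.card_def]
  rcases Nat.mod_two_eq_zero_or_one t with h | h <;>
    simp only [h, zero_ne_one, one_ne_zero, false_and, false_or, or_false,
      true_and]
  · rw [card_fwd_fst n i _ hi hin, card_fwd_snd n i _ hi hin]
  · rw [card_bwd_fst n i _ hi hin, card_bwd_snd n i _ hi hin]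
    omega

/-- Initial segment of the degree sequence of the Kyle graph `O_{2k+1}(s)`:
for `1 ≤ i ≤ h₁ + 1` (where `h₁` is the minimum entry and `k` the maximum entry of
`s`, all entries being ≥ 1), `d(v_i) = d(v_{n+1-i}) = Σ_t a_t + (i-1)·l`. -/
theorem kyle_graph_initial_degrees (s : List ℕ) (hpos : ∀ a ∈ s, 1 ≤ a)
    (k h₁ : ℕ) (hk : k ∈ s) (hmax : ∀ a ∈ s, a ≤ k)
    (hh : h₁ ∈ s) (hmin : ∀ a ∈ s, h₁ ≤ a) :
    ∀ i, 1 ≤ i → i ≤ h₁ + 1 →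
      ornDeg s (2 * k + 1) i = s.sum + (i - 1) * s.length ∧
      ornDeg s (2 * k + 1) (2 * k + 1 + 1 - i) = s.sum + (i - 1) * s.length := by
  have hk1 : 1 ≤ k := hpos k hk
  have hhk : h₁ ≤ k := hmin k hk
  intro i h1 h2
  have hi_n : i ≤ 2 * k + 1 := by omega
  have hj1 : 1 ≤ 2 * k + 1 + 1 - i := by omega
  have hj_n : 2 * k + 1 + 1 - i ≤ 2 * k + 1 := by omega
  have key : ∀ x : ℕ, 1 ≤ x → x ≤ 2 * k + 1 →
      (x = i ∨ x = 2 * k + 1 + 1 - i) →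
      ornDeg s (2 * k + 1) x = s.sum + (i - 1) * s.length := by
    intro x hx1 hxn hx
    rw [ornDeg_eq s (2 * k + 1) x hx1 hxn]
    have : ∀ t ∈ Finset.range s.length,
        min (s.getD t 0) (2 * k + 1 - x) + min (s.getD t 0) (x - 1)
          = s.getD t 0 + (i - 1) := by
      intro t ht
      rw [Finset.mem_range] at ht
      have hmem : s.getD t 0 ∈ s := by
        rw [List.getD_eq_getElem s 0 ht]
        exact List.getElem_mem ht
      have h1' : s.getD t 0 ≤ k := hmax _ hmem
      have h2' : h₁ ≤ s.getD t 0 := hmin _ hmem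
      omega
    rw [Finset.sum_congr rfl this, Finset.sum_add_distrib, sum_getD]
    simp [Finset.sum_const, mul_comm]
  exact ⟨key i h1 hi_n (Or.inl rfl), key (2 * k + 1 + 1 - i) hj1 hj_n (Or.inr rfl)⟩
end

section
/- Strict unimodality of the degree sequence of the Kyle graph: let s = (a_1, …, a_l) be an ordered string with k = max{a_1, …, a_l} ≥ 1 and n = 2k + 1. Then the degrees in O_{2k+1}(s) satisfy d(v_i) < d(v_{i+1}) for every 1 ≤ i ≤ k and d(v_i) > d(v_{i+1}) for every k + 1 ≤ i ≤ 2k; that is, the degree sequence strictly increases from v_1 up to the central vertex v_{k+1} and then strictly decreases. -/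
/-- Count of arcs from one string entry leaving `i` upward. -/
lemma card_out_up (n i a : ℕ) (h1 : 1 ≤ i) (h2 : i ≤ n) (q : ℕ × ℕ → Prop)
    [DecidablePred q] (hq : ∀ p, q p ↔ (p.1 < p.2 ∧ p.2 ≤ p.1 + a) ∧ p.1 = i) :
    ((Finset.Icc 1 n ×ˢ Finset.Icc 1 n).filter q).card = min a (n - i) := by
  have h : ((Finset.Icc 1 n ×ˢ Finset.Icc 1 n).filter q)
      = {i} ×ˢ Finset.Icc (i+1) (min (i+a) n) := by
    ext ⟨x, y⟩
    simp only [Finset.mem_filter, Finset.mem_product, Finset.mem_Icc,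
      Finset.mem_singleton, hq]
    omega
  rw [h]
  simp [Finset.card_product, Nat.card_Icc]
  omega

/-- Count of arcs from one string entry entering `i` from below. -/
lemma card_in_up (n i a : ℕ) (h1 : 1 ≤ i) (h2 : i ≤ n) (q : ℕ × ℕ → Prop)
    [DecidablePred q] (hq : ∀ p, q p ↔ (p.1 < p.2 ∧ p.2 ≤ p.1 + a) ∧ p.2 = i) :
    ((Finset.Icc 1 n ×ˢ Finset.Icc 1 n).filter q).card = min a (i - 1) := by
  have h : ((Finset.Icc 1 n ×ˢ Finset.Icc 1 n).filter q)
      = Finset.Icc (i - min a (i - 1)) (i - 1) ×ˢ {i} := by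
    ext ⟨x, y⟩
    simp only [Finset.mem_filter, Finset.mem_product, Finset.mem_Icc,
      Finset.mem_singleton, hq]
    omega
  rw [h]
  simp [Finset.card_product, Nat.card_Icc]
  omega

/-- Count of arcs from one string entry leaving `i` downward. -/
lemma card_out_down (n i a : ℕ) (h1 : 1 ≤ i) (h2 : i ≤ n) (q : ℕ × ℕ → Prop)
    [DecidablePred q] (hq : ∀ p, q p ↔ (p.2 < p.1 ∧ p.1 ≤ p.2 + a) ∧ p.1 = i) :
    ((Finset.Icc 1 n ×ˢ Finset.Icc 1 n).filter q).card = min a (i - 1) := by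
  have h : ((Finset.Icc 1 n ×ˢ Finset.Icc 1 n).filter q)
      = {i} ×ˢ Finset.Icc (i - min a (i - 1)) (i - 1) := by
    ext ⟨x, y⟩
    simp only [Finset.mem_filter, Finset.mem_product, Finset.mem_Icc,
      Finset.mem_singleton, hq]
    omega
  rw [h]
  simp [Finset.card_product, Nat.card_Icc]
  omega

/-- Count of arcs from one string entry entering `i` from above. -/
lemma card_in_down (n i a : ℕ) (h1 : 1 ≤ i) (h2 : i ≤ n) (q : ℕ × ℕ → Prop)
    [DecidablePred q] (hq : ∀ p, q p ↔ (p.2 < p.1 ∧ p.1 ≤ p.2 + a) ∧ p.2 = i) :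
    ((Finset.Icc 1 n ×ˢ Finset.Icc 1 n).filter q).card = min a (n - i) := by
  have h : ((Finset.Icc 1 n ×ˢ Finset.Icc 1 n).filter q)
      = Finset.Icc (i+1) (min (i+a) n) ×ˢ {i} := by
    ext ⟨x, y⟩
    simp only [Finset.mem_filter, Finset.mem_product, Finset.mem_Icc,
      Finset.mem_singleton, hq]
    omega
  rw [h]
  simp [Finset.card_product, Nat.card_Icc]
  omega

/-- Cardinality of a filter distributes over a list sum of multisets. -/
lemma card_filter_listSum {α : Type*} (L : List (Multiset α)) (q : α → Prop)
    [DecidablePred q] :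
    Multiset.card (L.sum.filter q) = (L.map (fun m => Multiset.card (m.filter q))).sum := by
  induction L with
  | nil => simp
  | cons m L ih => simp [Multiset.filter_add, ih]

/-- Closed formula for the degree of vertex `i` in `O_n(s)`. -/
lemma ornDeg_eq_s12 (s : List ℕ) (n i : ℕ) (h1 : 1 ≤ i) (h2 : i ≤ n) :
    ornDeg s n i = (s.map (fun a => min a (n - i) + min a (i - 1))).sum := by
  unfold ornDeg ornArcs
  rw [card_filter_listSum, card_filter_listSum, List.map_map, List.map_map,
    ← List.sum_map_add]
  have key : (s.map (fun a => min a (n - i) + min a (i - 1))).sum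
      = ((List.range s.length).map
          (fun t => min (s.getD t 0) (n - i) + min (s.getD t 0) (i - 1))).sum := by
    congr 1
    apply List.ext_getElem (by simp)
    intro t ht1 ht2
    have ht : t < s.length := by simpa using ht1
    simp [List.getD_eq_getElem?_getD, List.getElem?_eq_getElem ht]
  rw [key]
  congr 1
  apply List.ext_getElem (by simp)
  intro t ht1 ht2
  simp only [List.getElem_map, List.getElem_range, Function.comp]
  rw [← Finset.filter_val, ← Finset.filter_val, Finset.filter_filter, Finset.filter_filter,
    ← Finset.card_def, ← Finset.card_def]
  set a := s.getD t 0 with ha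
  rcases Nat.mod_two_eq_zero_or_one t with ht | ht
  · rw [card_out_up n i a h1 h2 _ (fun p => by simp [ht]),
      card_in_up n i a h1 h2 _ (fun p => by simp [ht])]
  · rw [card_out_down n i a h1 h2 _ (fun p => by simp [ht]),
      card_in_down n i a h1 h2 _ (fun p => by simp [ht])]
    omega

/-- Pointwise ≤ on a list with one strict inequality gives strict sum inequality. -/
lemma sum_map_lt {s : List ℕ} {f g : ℕ → ℕ} (hle : ∀ a ∈ s, f a ≤ g a)
    {b : ℕ} (hb : b ∈ s) (hlt : f b < g b) :
    (s.map f).sum < (s.map g).sum := by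
  induction s with
  | nil => simp at hb
  | cons c s ih =>
    simp only [List.map_cons, List.sum_cons]
    rcases List.mem_cons.mp hb with rfl | hb'
    · exact Nat.add_lt_add_of_lt_of_le hlt
        (List.sum_le_sum fun a ha => hle a (List.mem_cons_of_mem _ ha))
    · exact Nat.add_lt_add_of_le_of_lt (hle c List.mem_cons_self)
        (ih (fun a ha => hle a (List.mem_cons_of_mem _ ha)) hb')

/-- Strict unimodality of the degree sequence of the Kyle graph `O_{2k+1}(s)`:
degrees strictly increase from `v_1` to the central vertex `v_{k+1}` and then
strictly decrease down to `v_{2k+1}`. -/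
theorem kyle_graph_degree_unimodal (s : List ℕ) (k : ℕ) (hk : k ∈ s)
    (hmax : ∀ a ∈ s, a ≤ k) (hk1 : 1 ≤ k) :
    (∀ i, 1 ≤ i → i ≤ k →
      ornDeg s (2 * k + 1) i < ornDeg s (2 * k + 1) (i + 1)) ∧
    (∀ i, k + 1 ≤ i → i ≤ 2 * k →
      ornDeg s (2 * k + 1) (i + 1) < ornDeg s (2 * k + 1) i) := by
  constructor
  · intro i hi1 hik
    rw [ornDeg_eq_s12 s _ i hi1 (by omega), ornDeg_eq_s12 s _ (i+1) (by omega) (by omega)]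
    exact sum_map_lt (fun a ha => by have := hmax a ha; omega) hk
      (by have := hmax k hk; omega)
  · intro i hi1 hik
    rw [ornDeg_eq_s12 s _ i (by omega) (by omega), ornDeg_eq_s12 s _ (i+1) (by omega) (by omega)]
    exact sum_map_lt (fun a ha => by have := hmax a ha; omega) hk
      (by have := hmax k hk; omega)
end
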